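/- There is a constant K > 0 such that for every n ≥ 2 and every L ≥ 2, the cardinality of the set of matrices A : Matrix (Fin n) (Fin n) (ZMod 2) for which there exists a depth-2 circuit with linear middle gates computing x ↦ A.mulVec x with at most L wires is at most 2^(K * L * Real.logb 2 (n * L)). -/

import Mathlib

open Matrix

/-- `g` depends only on the coordinates in `T`. -/
def DependsOnlyOn {k : ℕ} (g : (Fin k → ZMod 2) → ZMod 2) (T : Finset (Fin k)) : Prop :=
  ∀ u v : Fin k → ZMod 2, (∀ i ∈ T, u i = v i) → g u = g v

/-- The number of nonzero entries of a matrix. -/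
def nnz {α β : Type*} [Fintype α] [Fintype β] (M : Matrix α β (ZMod 2)) : ℕ :=
  (Finset.univ.filter (fun p : α × β => M p.1 p.2 ≠ 0)).card

/-!
If the circuit computes `A`, the linear form `x ↦ (A x)ᵢ` factors through the parities
`(B x)ⱼ`, `j ∈ Tᵢ`, so row `i` of `A` lies in the span of those rows of `B`; over `𝔽₂` it is the
sum of the rows in some `Sᵢ ⊆ Tᵢ`. Hence `A = C B` with `nnz C ≤ ∑ |Tᵢ| ≤ L`, and discarding the
zero rows of `B` (at most `nnz B ≤ L` remain) gives `A = C' B'` with inner dimension `L` and both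
factors having at most `L` nonzero entries. An `𝔽₂`-matrix is determined by its support, so each
factor is one of at most `(nL + 1)^L` matrices, and `(nL + 1)^(2L) ≤ (nL)^(4L) = 2^(4L log₂(nL))`.
-/

open Finset

theorem mem_span_rows_of_comp_mulVec_eq {K ι κ : Type*} [Field K] [Fintype ι]
    (B : Matrix κ ι K) (a : ι → K) (T : Finset κ) (g : (κ → K) → K)
    (hg : ∀ u v, (∀ j ∈ T, u j = v j) → g u = g v) (h : ∀ x, g (B *ᵥ x) = a ⬝ᵥ x) :
    a ∈ Submodule.span K (B '' T) := by
  classical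
  let rowForm : T → (ι → K) →ₗ[K] K := fun j => LinearMap.proj j.1 ∘ₗ B.mulVecLin
  have hker : ⨅ j, LinearMap.ker (rowForm j) ≤ LinearMap.ker (dotProductBilin K K a) := by
    intro x hx
    simp only [Submodule.mem_iInf, LinearMap.mem_ker, rowForm, LinearMap.comp_apply,
      mulVecLin_apply, LinearMap.proj_apply, Subtype.forall] at hx
    rw [LinearMap.mem_ker, dotProductBilin_apply_apply, ← h, hg _ (B *ᵥ 0) fun j hj => ?_, h,
      dotProduct_zero]
    rw [hx j hj, mulVec_zero, Pi.zero_apply]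
  obtain ⟨c, hc⟩ :=
    (Submodule.mem_span_range_iff_exists_fun K).1 (mem_span_of_iInf_ker_le_ker hker)
  refine (Fintype.mem_span_image_iff_exists_fun K).2 ⟨c, funext fun k => ?_⟩
  simpa [rowForm, mulVec_single, dotProduct_single] using
    LinearMap.congr_fun hc (Pi.single k 1)

theorem ZMod.exists_subset_sum_eq_of_mem_span {ι M : Type*} [AddCommGroup M] [Module (ZMod 2) M]
    {v : ι → M} {s : Set ι} {x : M} (hx : x ∈ Submodule.span (ZMod 2) (v '' s)) :
    ∃ t : Finset ι, ↑t ⊆ s ∧ x = ∑ i ∈ t, v i := by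
  obtain ⟨l, hl, rfl⟩ := (Finsupp.mem_span_image_iff_linearCombination _).1 hx
  refine ⟨l.support, hl, ?_⟩
  rw [Finsupp.linearCombination_apply, Finsupp.sum]
  refine sum_congr rfl fun i hi => ?_
  have hli : l i = 1 := Fin.eq_one_of_ne_zero _ (Finsupp.mem_support_iff.1 hi)
  rw [hli, one_smul]

theorem Matrix.mul_eq_extend_mul_extend {α β κ μ R : Type*} [Fintype κ] [Fintype μ]
    [NonUnitalNonAssocSemiring R] (C : Matrix α κ R) (B : Matrix κ β R) {s : Finset κ}
    (hB : ∀ k ∉ s, B k = 0) {e : s → μ} (he : Function.Injective e) :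
    C * B =
      (of (Function.extend e (fun k => Cᵀ k) 0))ᵀ * of (Function.extend e (fun k => B k) 0) := by
  ext i j
  simp only [mul_apply, transpose_apply, of_apply]
  rw [← sum_subset (subset_univ s) fun k _ hk => by simp [hB k hk], ← sum_coe_sort]
  refine Fintype.sum_of_injective e he _ _ (fun l hl => ?_) fun k => ?_
  · rw [Function.extend_apply' _ _ _ fun ⟨k, hk⟩ => hl ⟨k, hk⟩, Pi.zero_apply, Pi.zero_apply,
      zero_mul]
  · rw [he.extend_apply, he.extend_apply, transpose_apply]

theorem card_finsets_of_card_le (X : Type*) [Fintype X] (m : ℕ) :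
    Nat.card {s : Finset X // s.card ≤ m} ≤ (Fintype.card X + 1) ^ m := by
  classical
  let decode : (Fin m → Option X) → {s : Finset X // s.card ≤ m} := fun f =>
    ⟨(univ.image f).eraseNone, (card_eraseNone_le _).trans (card_image_le.trans_eq (card_fin m))⟩
  have hdecode : Function.Surjective decode := by
    rintro ⟨s, hs⟩
    refine ⟨fun k => s.toList[k.1]?, Subtype.ext (ext fun x => ?_)⟩
    simp only [decode, mem_eraseNone, mem_image, mem_univ, true_and, ← mem_toList (s := s),
      List.mem_iff_getElem?]
    refine ⟨fun ⟨k, hk⟩ => ⟨k, hk⟩, fun ⟨k, hk⟩ => ⟨⟨k, ?_⟩, hk⟩⟩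
    have : k < s.card := by simpa using (List.getElem?_eq_some_iff.1 hk).1
    omega
  calc Nat.card {s : Finset X // s.card ≤ m}
      ≤ Nat.card (Fin m → Option X) := Nat.card_le_card_of_surjective _ hdecode
    _ = (Fintype.card X + 1) ^ m := by simp

section nnz

variable {α β γ δ : Type*} [Fintype α] [Fintype β] [Fintype γ] [Fintype δ]

theorem mem_filter_nnz {M : Matrix α β (ZMod 2)} {p : α × β} :
    p ∈ univ.filter (fun p : α × β => M p.1 p.2 ≠ 0) ↔ M p.1 p.2 ≠ 0 := by
  simp only [mem_filter, mem_univ, true_and]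

theorem nnz_indicator [DecidableEq β] (S : α → Finset β) :
    nnz (of fun i j => if j ∈ S i then (1 : ZMod 2) else 0) = ∑ i, (S i).card := by
  rw [nnz, card_filter, Fintype.sum_prod_type]
  refine sum_congr rfl fun i _ => ?_
  rw [← card_filter]
  congr
  ext j
  simp

theorem nnz_transpose (M : Matrix α β (ZMod 2)) : nnz Mᵀ = nnz M :=
  card_equiv (Equiv.prodComm β α) fun _ => by simp only [mem_filter_nnz]; rfl

theorem nnz_submatrix_le (M : Matrix α β (ZMod 2)) {f : γ → α} {g : δ → β}
    (hf : Function.Injective f) (hg : Function.Injective g) : nnz (M.submatrix f g) ≤ nnz M :=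
  card_le_card_of_injOn (Prod.map f g)
    (fun _ hp => mem_filter_nnz.2 (mem_filter_nnz (M := M.submatrix f g).1 hp))
    (hf.prodMap hg).injOn

theorem nnz_extend_le (M : α → β → ZMod 2) {e : α → γ} (he : Function.Injective e) :
    nnz (of (Function.extend e M 0)) ≤ nnz (of M) := by
  classical
  calc nnz (of (Function.extend e M 0))
      ≤ ((univ.filter fun p : α × β => M p.1 p.2 ≠ 0).image (Prod.map e id)).card := by
        refine card_le_card fun p hp => ?_
        obtain ⟨l, j⟩ := p
        replace hp : Function.extend e M 0 l j ≠ 0 := mem_filter_nnz.1 hp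
        by_cases hl : ∃ k, e k = l
        · obtain ⟨k, rfl⟩ := hl
          rw [he.extend_apply] at hp
          exact mem_image_of_mem (Prod.map e id) (a := (k, j)) (mem_filter_nnz.2 hp)
        · simp [Function.extend_apply' _ _ _ hl] at hp
    _ ≤ nnz (of M) := card_image_le

theorem card_matrices_of_nnz_le (m : ℕ) :
    Nat.card {M : Matrix α β (ZMod 2) // nnz M ≤ m} ≤
      (Fintype.card α * Fintype.card β + 1) ^ m := by
  have eq_of_ne_zero_iff : ∀ a b : ZMod 2, (a ≠ 0 ↔ b ≠ 0) → a = b := by decide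
  have hsupport : Function.Injective fun M : {M : Matrix α β (ZMod 2) // nnz M ≤ m} =>
      (⟨univ.filter (fun p : α × β => M.1 p.1 p.2 ≠ 0), M.2⟩ :
        {s : Finset (α × β) // s.card ≤ m}) := by
    intro M N hMN
    ext i j
    have hij := congrArg (fun s : {s : Finset (α × β) // s.card ≤ m} => (i, j) ∈ s.1) hMN
    simp only [mem_filter_nnz, eq_iff_iff] at hij
    exact eq_of_ne_zero_iff _ _ hij
  calc Nat.card {M : Matrix α β (ZMod 2) // nnz M ≤ m}
      ≤ Nat.card {s : Finset (α × β) // s.card ≤ m} := Nat.card_le_card_of_injective _ hsupport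
    _ ≤ _ := by simpa using card_finsets_of_card_le (α × β) m

theorem exists_fin_mul_eq_of_nnz_le (C : Matrix α γ (ZMod 2)) (B : Matrix γ β (ZMod 2)) {L : ℕ}
    (hB : nnz B ≤ L) :
    ∃ (C' : Matrix α (Fin L) (ZMod 2)) (B' : Matrix (Fin L) β (ZMod 2)),
      nnz C' ≤ nnz C ∧ nnz B' ≤ nnz B ∧ C' * B' = C * B := by
  classical
  set s := (univ.filter fun p : γ × β => B p.1 p.2 ≠ 0).image Prod.fst
  have hBs : ∀ k ∉ s, B k = 0 := fun k hk => funext fun j => by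
    by_contra h
    exact hk (mem_image_of_mem Prod.fst (a := (k, j)) (mem_filter_nnz.2 h))
  let e : s ↪ Fin L := s.equivFin.toEmbedding.trans (Fin.castLEEmb (card_image_le.trans hB))
  refine ⟨_, _, ?_, ?_, (mul_eq_extend_mul_extend C B hBs e.injective).symm⟩
  · rw [nnz_transpose]
    calc _ ≤ nnz (Cᵀ.submatrix Subtype.val id : Matrix s α (ZMod 2)) :=
          nnz_extend_le _ e.injective
      _ ≤ nnz C := (nnz_submatrix_le _ Subtype.val_injective Function.injective_id).trans_eq
          (nnz_transpose C)
  · exact (nnz_extend_le _ e.injective).trans (nnz_submatrix_le B Subtype.val_injective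
      Function.injective_id)

theorem card_le_of_forall_exists_mul_eq (κ : Type*) [Fintype κ] (m : ℕ)
    (P : Matrix α β (ZMod 2) → Prop)
    (hP : ∀ A, P A → ∃ (C : Matrix α κ (ZMod 2)) (B : Matrix κ β (ZMod 2)),
      nnz C ≤ m ∧ nnz B ≤ m ∧ C * B = A) :
    Nat.card {A // P A} ≤
      (Fintype.card α * Fintype.card κ + 1) ^ m * (Fintype.card κ * Fintype.card β + 1) ^ m := by
  choose C B hC hB hCB using hP
  have hinj : Function.Injective fun A : {A // P A} =>
      ((⟨C A.1 A.2, hC A.1 A.2⟩, ⟨B A.1 A.2, hB A.1 A.2⟩) :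
        {C : Matrix α κ (ZMod 2) // nnz C ≤ m} × {B : Matrix κ β (ZMod 2) // nnz B ≤ m}) := by
    intro A A' h
    simp only [Prod.mk.injEq, Subtype.mk.injEq] at h
    rw [Subtype.ext_iff, ← hCB A.1 A.2, ← hCB A'.1 A'.2, h.1, h.2]
  calc Nat.card {A // P A} ≤ _ := Nat.card_le_card_of_injective _ hinj
    _ ≤ _ := by
      rw [Nat.card_prod]
      exact Nat.mul_le_mul (card_matrices_of_nnz_le m) (card_matrices_of_nnz_le m)

end nnz

theorem exists_mul_eq_of_dependsOnlyOn {α ι : Type*} [Fintype α] [Fintype ι] {r : ℕ}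
    (A : Matrix α ι (ZMod 2)) (B : Matrix (Fin r) ι (ZMod 2)) (T : α → Finset (Fin r))
    (g : α → (Fin r → ZMod 2) → ZMod 2) (hdep : ∀ i, DependsOnlyOn (g i) (T i))
    (hcomp : ∀ x i, g i (B *ᵥ x) = (A *ᵥ x) i) :
    ∃ C : Matrix α (Fin r) (ZMod 2), nnz C ≤ ∑ i, (T i).card ∧ C * B = A := by
  classical
  choose S hST hS using fun i => ZMod.exists_subset_sum_eq_of_mem_span
    (mem_span_rows_of_comp_mulVec_eq B (A i) (T i) (g i) (hdep i) (hcomp · i))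
  refine ⟨of fun i j => if j ∈ S i then 1 else 0, ?_, ?_⟩
  · rw [nnz_indicator]
    exact sum_le_sum fun i _ => card_le_card (coe_subset.1 (hST i))
  · ext i k
    simp only [mul_apply, of_apply, ite_mul, one_mul, zero_mul, sum_ite_mem, univ_inter, hS i]
    exact (Finset.sum_apply k _ _).symm

theorem add_one_pow_mul_add_one_pow_le {N : ℕ} (hN : 2 ≤ N) (L : ℕ) :
    (N + 1) ^ L * (N + 1) ^ L ≤ N ^ (4 * L) := by
  calc (N + 1) ^ L * (N + 1) ^ L ≤ (N ^ 2) ^ L * (N ^ 2) ^ L := by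
        gcongr <;> nlinarith
    _ = N ^ (4 * L) := by ring

theorem Real.pow_eq_rpow_mul_logb {b x : ℝ} (hb : 0 < b) (hb1 : b ≠ 1) (hx : 0 < x) (k : ℕ) :
    x ^ k = b ^ (k * Real.logb b x) := by
  rw [mul_comm, Real.rpow_mul_natCast hb.le, Real.rpow_logb hb hb1 hx]

/-- The number of matrices `A` computable by a depth-2 circuit with linear middle gates
and at most `L` wires is at most `2^(K·L·log₂(nL))`. -/
theorem card_matrices_computable_linear_middle_le :
    ∃ K : ℝ, K > 0 ∧ ∀ n ≥ 2, ∀ L : ℕ, 2 ≤ L →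
      (Nat.card {A : Matrix (Fin n) (Fin n) (ZMod 2) //
          ∃ (r : ℕ) (B : Matrix (Fin r) (Fin n) (ZMod 2))
            (T : Fin n → Finset (Fin r)) (g : Fin n → ((Fin r → ZMod 2) → ZMod 2)),
            (∀ i : Fin n, DependsOnlyOn (g i) (T i)) ∧
            (∀ (x : Fin n → ZMod 2) (i : Fin n), g i (B.mulVec x) = A.mulVec x i) ∧
            nnz B + ∑ i : Fin n, (T i).card ≤ L} : ℝ)
        ≤ (2 : ℝ) ^ (K * (L : ℝ) * Real.logb 2 ((n : ℝ) * (L : ℝ))) := by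
  refine ⟨4, by norm_num, fun n hn L hL => ?_⟩
  have hnL : 2 ≤ n * L := by nlinarith
  calc _ ≤ (((n * L) ^ (4 * L) : ℕ) : ℝ) := by
        refine Nat.cast_le.2 ((card_le_of_forall_exists_mul_eq (Fin L) L _ ?_).trans ?_)
        · rintro A ⟨r, B, T, g, hdep, hcomp, hw⟩
          obtain ⟨C, hC, rfl⟩ := exists_mul_eq_of_dependsOnlyOn A B T g hdep hcomp
          obtain ⟨C', B', hC', hB', hCB⟩ := exists_fin_mul_eq_of_nnz_le C B (L := L) (by omega)
          exact ⟨C', B', by omega, by omega, hCB⟩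
        · simpa [mul_comm L n] using add_one_pow_mul_add_one_pow_le hnL L
    _ = _ := by
      rw [Nat.cast_pow, Real.pow_eq_rpow_mul_logb two_pos (by norm_num) (by positivity)]
      push_cast
      ring_nf
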